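/- arXiv:1311.6418 — 2 statements merged into one kernel-verified Lean document; each statement's English description precedes it below -/
import Mathlib

section
/- For all ρ > 0 one has ρ·coth(ρ) − 1 ≥ 3ρ²/(π² + ρ²). -/
/-!
Clearing denominators, `3ρ² / (9 + ρ²) ≤ ρ coth ρ - 1` becomes
`F ρ ≥ 0` with `F x = x (9 + x²) cosh x - (9 + 4x²) sinh x`. Now `F 0 = 0` and
`F' x = x G x` with `G x = (1 + x²) sinh x - x cosh x`, while `G 0 = 0` and
`G' x = x sinh x + x² cosh x ≥ 0`; so `G ≥ 0`, hence `F ≥ 0`, on `[0, ∞)`.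
Since `9 < π²`, the bound with `π²` in place of `9` follows.
-/

open Real Set

lemma nonneg_of_hasDerivAt_of_nonneg {f f' : ℝ → ℝ} (hf : ∀ x, HasDerivAt f (f' x) x)
    (hf₀ : f 0 = 0) (hf' : ∀ x, 0 < x → 0 ≤ f' x) {x : ℝ} (hx : 0 ≤ x) : 0 ≤ f x := by
  have hmono : MonotoneOn f (Ici 0) :=
    monotoneOn_of_hasDerivWithinAt_nonneg (convex_Ici 0)
      (fun y _ ↦ (hf y).continuousAt.continuousWithinAt)
      (fun y _ ↦ (hf y).hasDerivWithinAt)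
      (fun y hy ↦ hf' y (by simpa using hy))
  simpa [hf₀] using hmono self_mem_Ici hx hx

lemma mul_cosh_le_one_add_sq_mul_sinh {x : ℝ} (hx : 0 ≤ x) :
    x * cosh x ≤ (1 + x ^ 2) * sinh x := by
  have hderiv : ∀ y, HasDerivAt (fun y ↦ (1 + y ^ 2) * sinh y - y * cosh y)
      (y * sinh y + y ^ 2 * cosh y) y := fun y ↦ by
    refine ((((hasDerivAt_pow 2 y).const_add 1).mul (hasDerivAt_sinh y)).sub
      ((hasDerivAt_id' y).mul (hasDerivAt_cosh y))).congr_deriv ?_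
    push_cast
    ring
  have hderiv_nonneg : ∀ y, 0 < y → 0 ≤ y * sinh y + y ^ 2 * cosh y := fun y hy ↦
    add_nonneg (mul_nonneg hy.le (sinh_nonneg_iff.mpr hy.le))
      (mul_nonneg (sq_nonneg y) (cosh_pos y).le)
  have := nonneg_of_hasDerivAt_of_nonneg hderiv (by simp) hderiv_nonneg hx
  linarith

lemma nine_add_four_mul_sq_mul_sinh_le {x : ℝ} (hx : 0 ≤ x) :
    (9 + 4 * x ^ 2) * sinh x ≤ x * (9 + x ^ 2) * cosh x := by
  have hderiv : ∀ y, HasDerivAt (fun y ↦ y * (9 + y ^ 2) * cosh y - (9 + 4 * y ^ 2) * sinh y)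
      (y * ((1 + y ^ 2) * sinh y - y * cosh y)) y := fun y ↦ by
    refine ((((hasDerivAt_id' y).mul ((hasDerivAt_pow 2 y).const_add 9)).mul
      (hasDerivAt_cosh y)).sub
      ((((hasDerivAt_pow 2 y).const_mul 4).const_add 9).mul (hasDerivAt_sinh y))).congr_deriv ?_
    push_cast [Pi.mul_apply]
    ring
  have hderiv_nonneg : ∀ y, 0 < y → 0 ≤ y * ((1 + y ^ 2) * sinh y - y * cosh y) := fun y hy ↦
    mul_nonneg hy.le (sub_nonneg.mpr (mul_cosh_le_one_add_sq_mul_sinh hy.le))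
  have := nonneg_of_hasDerivAt_of_nonneg hderiv (by simp) hderiv_nonneg hx
  linarith

lemma three_mul_sq_div_nine_add_sq_le_mul_coth_sub_one {ρ : ℝ} (hρ : 0 < ρ) :
    3 * ρ ^ 2 / (9 + ρ ^ 2) ≤ ρ * (cosh ρ / sinh ρ) - 1 := by
  have hsinh : 0 < sinh ρ := sinh_pos_iff.mpr hρ
  rw [div_le_iff₀ (by positivity), mul_div_assoc', sub_mul, div_mul_eq_mul_div,
    le_sub_iff_add_le, le_div_iff₀ hsinh]
  nlinarith [nine_add_four_mul_sq_mul_sinh_le hρ.le]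

theorem coth_sub_one_ge (ρ : ℝ) (hρ : 0 < ρ) :
    ρ * (Real.cosh ρ / Real.sinh ρ) - 1 ≥ 3 * ρ ^ 2 / (Real.pi ^ 2 + ρ ^ 2) := by
  have hpi : (9 : ℝ) ≤ π ^ 2 := by nlinarith [pi_gt_three]
  calc 3 * ρ ^ 2 / (π ^ 2 + ρ ^ 2)
      ≤ 3 * ρ ^ 2 / (9 + ρ ^ 2) := by gcongr
    _ ≤ ρ * (cosh ρ / sinh ρ) - 1 := three_mul_sq_div_nine_add_sq_le_mul_coth_sub_one hρ
end

section
/- Extremality of the interpolation inequality in ℝⁿ: let 0 < q < 2 < p and 2 < n < 2(p−q)/(p−2). For λ > 0 set w_λ(x) = (λ + |x|^{2−q})^{1/(2−p)}. Then (∫_{ℝⁿ} |∇w_λ|² dx)·(∫_{ℝⁿ} w_λ^{2p−2}/|x|^{2q−2} dx) = ((n−q)²/p²)·(∫_{ℝⁿ} w_λ^p/|x|^q dx)². -/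
/-!
With `α = 2 - q` and `β = 1 / (2 - p)`, `w_λ(x) = (λ + |x|^α)^β` is radial with
`|∇w_λ(x)| = |αβ| |x|^(α-1) (λ + |x|^α)^(β-1)`, so `|∇w_λ|² = (αβ)² w_λ^(2p-2) / |x|^(2q-2)` off the
origin and `∫ |∇w_λ|² = (αβ)² R`, where `R = ∫ w_λ^(2p-2) / |x|^(2q-2)`.
In polar coordinates `P = ∫ w_λ^p / |x|^q` and `R` are the same multiple of
`∫₀^∞ r^(s-1) (λ + r^α)^(pβ)` and of `∫₀^∞ r^(s+α-1) (λ + r^α)^(pβ-1)`, where `s = n - q`; and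
`d/dr (r^s (λ + r^α)^(pβ))` integrates to zero over `(0, ∞)`, the constraints on `n` killing both
boundary terms. This gives `P = p(2-q) / ((n-q)(p-2)) · R`, and both sides of the identity equal
`(αβ)² R²`.
-/

open MeasureTheory Set Real Filter Topology InnerProductSpace

section Profile

variable {lam α β s : ℝ}

lemma hasDerivAt_add_rpow_rpow (hlam : 0 ≤ lam) {r : ℝ} (hr : 0 < r) :
    HasDerivAt (fun r : ℝ => (lam + r ^ α) ^ β)
      (α * β * r ^ (α - 1) * (lam + r ^ α) ^ (β - 1)) r := by
  have h := ((hasDerivAt_rpow_const (p := α) (Or.inl hr.ne')).const_add lam).rpow_const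
    (p := β) (Or.inl (by positivity))
  convert h using 1
  ring

lemma continuousOn_rpow_mul_add_rpow_rpow (hlam : 0 ≤ lam) :
    ContinuousOn (fun r : ℝ => r ^ s * (lam + r ^ α) ^ β) (Ioi 0) := by
  intro r (hr : 0 < r)
  refine ContinuousAt.continuousWithinAt ?_
  exact (continuousAt_rpow_const r s (Or.inl hr.ne')).mul
    ((hasDerivAt_add_rpow_rpow hlam hr).continuousAt)

/-- Near `0` the integrand behaves like `r ^ s`, near `∞` like `r ^ (s + α * β)`. -/
lemma integrableOn_Ioi_rpow_mul_add_rpow_rpow (hlam : 0 < lam) (hβ : β ≤ 0)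
    (hs : -1 < s) (hsβ : s + α * β < -1) :
    IntegrableOn (fun r : ℝ => r ^ s * (lam + r ^ α) ^ β) (Ioi 0) := by
  have hmeas : ∀ u ⊆ Ioi (0 : ℝ), MeasurableSet u →
      AEStronglyMeasurable (fun r : ℝ => r ^ s * (lam + r ^ α) ^ β) (volume.restrict u) :=
    fun u hu hmu =>
      ((continuousOn_rpow_mul_add_rpow_rpow hlam.le).mono hu).aestronglyMeasurable hmu
  rw [← Ioc_union_Ioi_eq_Ioi zero_le_one]
  refine IntegrableOn.union ?_ ?_
  · have hint : IntegrableOn (fun r : ℝ => lam ^ β * r ^ s) (Ioc 0 1) := by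
      refine Integrable.const_mul ?_ _
      exact (intervalIntegrable_iff_integrableOn_Ioc_of_le zero_le_one).mp
        (intervalIntegral.intervalIntegrable_rpow' hs)
    refine hint.mono' (hmeas _ Ioc_subset_Ioi_self measurableSet_Ioc) ?_
    filter_upwards [ae_restrict_mem measurableSet_Ioc] with r ⟨hr, _⟩
    rw [norm_of_nonneg (by positivity), mul_comm (lam ^ β)]
    exact mul_le_mul_of_nonneg_left
      (rpow_le_rpow_of_nonpos hlam (le_add_of_nonneg_right (by positivity)) hβ) (by positivity)
  · have hint : IntegrableOn (fun r : ℝ => r ^ (s + α * β)) (Ioi 1) :=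
      integrableOn_Ioi_rpow_of_lt hsβ zero_lt_one
    refine hint.mono' (hmeas _ (Ioi_subset_Ioi zero_le_one) measurableSet_Ioi) ?_
    filter_upwards [ae_restrict_mem measurableSet_Ioi] with r (hr : 1 < r)
    have hr0 : 0 < r := zero_lt_one.trans hr
    rw [norm_of_nonneg (by positivity), rpow_add hr0, rpow_mul hr0.le]
    exact mul_le_mul_of_nonneg_left
      (rpow_le_rpow_of_nonpos (by positivity) (le_add_of_nonneg_left hlam.le) hβ) (by positivity)

lemma tendsto_rpow_mul_add_rpow_rpow_atTop (hlam : 0 ≤ lam) (hβ : β ≤ 0)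
    (hsβ : s + α * β < 0) :
    Tendsto (fun r : ℝ => r ^ s * (lam + r ^ α) ^ β) atTop (𝓝 0) := by
  have hdecay : Tendsto (fun r : ℝ => r ^ (s + α * β)) atTop (𝓝 0) := by
    simpa using tendsto_rpow_neg_atTop (y := -(s + α * β)) (by linarith)
  refine squeeze_zero' ?_ ?_ hdecay
  · filter_upwards [eventually_gt_atTop 0] with r hr
    positivity
  · filter_upwards [eventually_gt_atTop 0] with r hr
    rw [rpow_add hr, rpow_mul hr.le]
    exact mul_le_mul_of_nonneg_left
      (rpow_le_rpow_of_nonpos (by positivity) (le_add_of_nonneg_left hlam) hβ) (by positivity)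

/-- `d/dr (r ^ s * (λ + r ^ α) ^ β)` integrates to zero over `(0, ∞)`. -/
lemma mul_integral_Ioi_rpow_mul_add_rpow_rpow (hlam : 0 < lam) (hα : 0 < α) (hβ : β < 0)
    (hs : 0 < s) (hsβ : s + α * β < 0) :
    s * ∫ r in Ioi 0, r ^ (s - 1) * (lam + r ^ α) ^ β
      = -(α * β) * ∫ r in Ioi 0, r ^ (s + α - 1) * (lam + r ^ α) ^ (β - 1) := by
  set f := fun r : ℝ => r ^ (s - 1) * (lam + r ^ α) ^ β
  set g := fun r : ℝ => r ^ (s + α - 1) * (lam + r ^ α) ^ (β - 1)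
  have hf : IntegrableOn f (Ioi 0) :=
    integrableOn_Ioi_rpow_mul_add_rpow_rpow hlam hβ.le (by linarith) (by linarith)
  have hg : IntegrableOn g (Ioi 0) :=
    integrableOn_Ioi_rpow_mul_add_rpow_rpow hlam (by linarith) (by linarith) (by nlinarith)
  have hderiv : ∀ r ∈ Ioi (0 : ℝ),
      HasDerivAt (fun r : ℝ => r ^ s * (lam + r ^ α) ^ β) (s * f r + α * β * g r) r := by
    intro r (hr : 0 < r)
    refine ((hasDerivAt_rpow_const (Or.inl hr.ne')).mul
      (hasDerivAt_add_rpow_rpow hlam.le hr)).congr_deriv ?_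
    simp only [f, g, show s + α - 1 = s + (α - 1) by ring, rpow_add hr]
    ring
  have hcont : ContinuousWithinAt (fun r : ℝ => r ^ s * (lam + r ^ α) ^ β) (Ici 0) 0 := by
    refine ContinuousAt.continuousWithinAt ?_
    refine (continuousAt_rpow_const 0 s (Or.inr hs.le)).mul (ContinuousAt.rpow_const ?_ ?_)
    · exact continuousAt_const.add (continuousAt_rpow_const 0 α (Or.inr hα.le))
    · simp [zero_rpow hα.ne', hlam.ne']
  have hFTC := integral_Ioi_of_hasDerivAt_of_tendsto hcont hderiv
    ((hf.const_mul s).add (hg.const_mul (α * β)))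
    (tendsto_rpow_mul_add_rpow_rpow_atTop hlam.le hβ.le hsβ)
  rw [integral_add (hf.const_mul s) (hg.const_mul (α * β)), integral_const_mul,
    integral_const_mul, zero_rpow hs.ne'] at hFTC
  linarith

end Profile

variable {E : Type*} [NormedAddCommGroup E]

/-- The paper's `w_λ`. -/
noncomputable def bubble (lam p q : ℝ) (x : E) : ℝ := (lam + ‖x‖ ^ (2 - q)) ^ (1 / (2 - p))

lemma bubble_rpow {lam : ℝ} (hlam : 0 ≤ lam) (p q c : ℝ) (x : E) :
    bubble lam p q x ^ c = (lam + ‖x‖ ^ (2 - q)) ^ (c / (2 - p)) := by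
  rw [bubble, ← rpow_mul (by positivity), one_div_mul_eq_div]

variable [InnerProductSpace ℝ E]

lemma hasFDerivAt_norm {x : E} (hx : x ≠ 0) :
    HasFDerivAt (fun y : E => ‖y‖) (‖x‖⁻¹ • innerSL ℝ x) x := by
  have h := (hasStrictFDerivAt_norm_sq x).hasFDerivAt.sqrt (by positivity)
  simp only [sqrt_sq (norm_nonneg _)] at h
  refine h.congr_fderiv ?_
  ext y
  simp only [one_div, mul_inv_rev, smul_apply, coe_innerSL_apply, nsmul_eq_mul, Nat.cast_ofNat,
    smul_eq_mul]
  field_simp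

lemma hasGradientAt_comp_norm [CompleteSpace E] {g : ℝ → ℝ} {g' : ℝ} {x : E}
    (hg : HasDerivAt g g' ‖x‖) (hx : x ≠ 0) :
    HasGradientAt (fun y : E => g ‖y‖) ((g' / ‖x‖) • x) x := by
  rw [hasGradientAt_iff_hasFDerivAt]
  refine (hg.comp_hasFDerivAt x (hasFDerivAt_norm hx)).congr_fderiv ?_
  ext y
  simp only [FunLike.coe_smul, Pi.smul_apply, innerSL_apply_apply, toDual_apply_apply,
    inner_smul_left, smul_eq_mul, conj_trivial]
  ring

lemma norm_gradient_comp_norm [CompleteSpace E] {g : ℝ → ℝ} {g' : ℝ} {x : E}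
    (hg : HasDerivAt g g' ‖x‖) (hx : x ≠ 0) :
    ‖gradient (fun y : E => g ‖y‖) x‖ = |g'| := by
  rw [(hasGradientAt_comp_norm hg hx).gradient, norm_smul, norm_div, norm_norm,
    div_mul_cancel₀ _ (norm_ne_zero_iff.mpr hx), norm_eq_abs]

lemma norm_gradient_bubble_sq [CompleteSpace E] {lam p : ℝ} (hlam : 0 ≤ lam) (hp : p ≠ 2)
    (q : ℝ) {x : E} (hx : x ≠ 0) :
    ‖gradient (bubble lam p q) x‖ ^ 2
      = ((2 - q) / (p - 2)) ^ 2 * (bubble lam p q x ^ (2 * p - 2) / ‖x‖ ^ (2 * q - 2)) := by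
  have hr : 0 < ‖x‖ := norm_pos_iff.mpr hx
  have hA : 0 < lam + ‖x‖ ^ (2 - q) := by positivity
  have hp' : 2 - p ≠ 0 := sub_ne_zero.mpr hp.symm
  have hgrad : ‖gradient (bubble lam p q) x‖
      = |(2 - q) * (1 / (2 - p)) * ‖x‖ ^ (2 - q - 1) *
          (lam + ‖x‖ ^ (2 - q)) ^ (1 / (2 - p) - 1)| :=
    norm_gradient_comp_norm (hasDerivAt_add_rpow_rpow hlam hr) hx
  rw [hgrad, sq_abs, bubble_rpow hlam, mul_pow, mul_pow, ← rpow_mul_natCast hr.le,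
    ← rpow_mul_natCast hA.le, div_eq_mul_inv _ (‖x‖ ^ _), ← rpow_neg hr.le,
    show (2 * p - 2) / (2 - p) = (1 / (2 - p) - 1) * (2 : ℕ) by field_simp; ring,
    show -(2 * q - 2) = (2 - q - 1) * (2 : ℕ) by push_cast; ring]
  field_simp
  ring

section Integrals

variable [MeasurableSpace E] (μ : Measure E)

lemma integral_norm_gradient_bubble_sq [CompleteSpace E] [NullSingletonClass μ] {lam p : ℝ}
    (hlam : 0 ≤ lam) (hp : p ≠ 2) (q : ℝ) :
    ∫ x, ‖gradient (bubble lam p q) x‖ ^ 2 ∂μ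
      = ((2 - q) / (p - 2)) ^ 2 * ∫ x, bubble lam p q x ^ (2 * p - 2) / ‖x‖ ^ (2 * q - 2) ∂μ := by
  rw [← integral_const_mul]
  refine integral_congr_ae ?_
  filter_upwards [Measure.ae_ne μ 0] with x hx
  exact norm_gradient_bubble_sq hlam hp q hx

variable [Nontrivial E] [FiniteDimensional ℝ E] [BorelSpace E] [μ.IsAddHaarMeasure]

lemma integral_bubble_rpow_div_norm_rpow {lam : ℝ} (hlam : 0 ≤ lam) (p q c d : ℝ) :
    ∫ x, bubble lam p q x ^ c / ‖x‖ ^ d ∂μ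
      = Module.finrank ℝ E * μ.real (Metric.ball 0 1) *
        ∫ r in Ioi 0,
          r ^ ((Module.finrank ℝ E : ℝ) - d - 1) * (lam + r ^ (2 - q)) ^ (c / (2 - p)) := by
  simp only [bubble_rpow hlam]
  rw [integral_fun_norm_addHaar μ (fun r => (lam + r ^ (2 - q)) ^ (c / (2 - p)) / r ^ d),
    nsmul_eq_mul, smul_eq_mul, mul_assoc]
  congr 2
  refine setIntegral_congr_fun measurableSet_Ioi fun r (hr : 0 < r) => ?_
  rw [smul_eq_mul, ← rpow_natCast, Nat.cast_pred Module.finrank_pos,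
    sub_right_comm _ d, rpow_sub hr _ d]
  ring

lemma integral_bubble_rpow_div_norm_rpow_eq_mul {lam p q : ℝ} (hlam : 0 < lam) (hq : q < 2)
    (hp : 2 < p) (hqn : q < Module.finrank ℝ E)
    (hn : (Module.finrank ℝ E : ℝ) < 2 * (p - q) / (p - 2)) :
    ∫ x, bubble lam p q x ^ p / ‖x‖ ^ q ∂μ
      = p * (2 - q) / ((Module.finrank ℝ E - q) * (p - 2)) *
        ∫ x, bubble lam p q x ^ (2 * p - 2) / ‖x‖ ^ (2 * q - 2) ∂μ := by
  rw [integral_bubble_rpow_div_norm_rpow μ hlam.le, integral_bubble_rpow_div_norm_rpow μ hlam.le,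
    mul_left_comm _ (_ * μ.real _)]
  congr 1
  set n : ℝ := (Module.finrank ℝ E : ℝ)
  have hp2 : 0 < p - 2 := by linarith
  have h2p : 2 - p ≠ 0 := by linarith
  have hs : 0 < n - q := by linarith
  have hβ : p / (2 - p) < 0 := div_neg_of_pos_of_neg (by linarith) (by linarith)
  have hsβ : (n - q) + (2 - q) * (p / (2 - p)) < 0 := by
    have hn' := (lt_div_iff₀ hp2).mp hn
    rw [show (n - q) + (2 - q) * (p / (2 - p)) = -(2 * (p - q) - n * (p - 2)) / (p - 2) by
      field_simp; ring]
    exact div_neg_of_neg_of_pos (by linarith) hp2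
  have hibp := mul_integral_Ioi_rpow_mul_add_rpow_rpow hlam (by linarith) hβ hs hsβ
  rw [show n - (2 * q - 2) - 1 = n - q + (2 - q) - 1 by ring,
    show (2 * p - 2) / (2 - p) = p / (2 - p) - 1 by field_simp; ring]
  set I₁ := ∫ r in Ioi 0, r ^ (n - q - 1) * (lam + r ^ (2 - q)) ^ (p / (2 - p))
  set I₂ := ∫ r in Ioi 0, r ^ (n - q + (2 - q) - 1) * (lam + r ^ (2 - q)) ^ (p / (2 - p) - 1)
  field_simp at hibp ⊢
  linear_combination -hibp

end Integrals

theorem interpolation_extremal_general (n : ℕ) (p q : ℝ)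
    (hq2 : q < 2) (hp : 2 < p)
    (hn : 2 < (n : ℝ)) (hn' : (n : ℝ) < 2 * (p - q) / (p - 2))
    (lam : ℝ) (hlam : 0 < lam) :
    (∫ x : EuclideanSpace ℝ (Fin n),
        ‖gradient (fun y : EuclideanSpace ℝ (Fin n) =>
          (lam + ‖y‖ ^ (2 - q)) ^ (1 / (2 - p))) x‖ ^ 2) *
      (∫ x : EuclideanSpace ℝ (Fin n),
        ((lam + ‖x‖ ^ (2 - q)) ^ (1 / (2 - p))) ^ (2 * p - 2) / ‖x‖ ^ (2 * q - 2)) =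
      (((n : ℝ) - q) ^ 2 / p ^ 2) *
        (∫ x : EuclideanSpace ℝ (Fin n),
          ((lam + ‖x‖ ^ (2 - q)) ^ (1 / (2 - p))) ^ p / ‖x‖ ^ q) ^ 2 := by
  have hdim : Module.finrank ℝ (EuclideanSpace ℝ (Fin n)) = n := finrank_euclideanSpace_fin
  have : Nontrivial (EuclideanSpace ℝ (Fin n)) :=
    Module.nontrivial_of_finrank_pos (R := ℝ) (by rw [hdim]; exact_mod_cast two_pos.trans hn)
  have hQ := integral_norm_gradient_bubble_sq (E := EuclideanSpace ℝ (Fin n)) (μ := volume)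
    hlam.le (by linarith : p ≠ 2) q
  have hP := integral_bubble_rpow_div_norm_rpow_eq_mul (E := EuclideanSpace ℝ (Fin n))
    (μ := volume) hlam hq2 hp (by rw [hdim]; linarith) (by rwa [hdim])
  rw [hdim] at hP
  change (∫ x, ‖gradient (bubble lam p q) x‖ ^ 2) *
      (∫ x, bubble lam p q x ^ (2 * p - 2) / ‖x‖ ^ (2 * q - 2))
    = ((n - q) ^ 2 / p ^ 2) * (∫ x, bubble lam p q x ^ p / ‖x‖ ^ q) ^ 2
  rw [hQ, hP]
  have : (n : ℝ) - q ≠ 0 := by linarith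
  have : p - 2 ≠ 0 := by linarith
  field_simp

theorem interpolation_extremal (n : ℕ) (p q : ℝ)
    (hq : 0 < q) (hq2 : q < 2) (hp : 2 < p)
    (hn : 2 < (n : ℝ)) (hn' : (n : ℝ) < 2 * (p - q) / (p - 2))
    (lam : ℝ) (hlam : 0 < lam) :
    (∫ x : EuclideanSpace ℝ (Fin n),
        ‖gradient (fun y : EuclideanSpace ℝ (Fin n) =>
          (lam + ‖y‖ ^ (2 - q)) ^ (1 / (2 - p))) x‖ ^ 2) *
      (∫ x : EuclideanSpace ℝ (Fin n),
        ((lam + ‖x‖ ^ (2 - q)) ^ (1 / (2 - p))) ^ (2 * p - 2) / ‖x‖ ^ (2 * q - 2)) =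
      (((n : ℝ) - q) ^ 2 / p ^ 2) *
        (∫ x : EuclideanSpace ℝ (Fin n),
          ((lam + ‖x‖ ^ (2 - q)) ^ (1 / (2 - p))) ^ p / ‖x‖ ^ q) ^ 2 :=
  interpolation_extremal_general n p q hq2 hp hn hn' lam hlam
end
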